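/- Let λ be a partition with ℓ(λ) < n and gcd(n, |λ|) = 1. Then the statistic T ↦ Σ_{i=1}^n (i−1)·c_i(T) is equidistributed modulo n on SSYT_n(λ): for every residue r ∈ {0, 1, …, n−1}, one has n · #{T ∈ SSYT_n(λ) : Σ_{i=1}^n (i−1)c_i(T) ≡ r (mod n)} = #SSYT_n(λ). -/

import Mathlib

open Finset

/-- Semistandard Young tableaux of shape `μ` with entries in `{0, …, n-1}`
(the 0-indexed version of entries in `{1, …, n}`). -/
def SSYTn (μ : YoungDiagram) (n : ℕ) : Type :=
  {T : SemistandardYoungTableau μ // ∀ i j : ℕ, (i, j) ∈ μ → T i j < n}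

noncomputable instance (μ : YoungDiagram) (n : ℕ) : Fintype (SSYTn μ n) := by
  apply Fintype.ofInjective
    (fun (T : SSYTn μ n) (c : μ.cells) =>
      (⟨T.1 c.1.1 c.1.2,
        Nat.lt_succ_of_lt (T.2 c.1.1 c.1.2 c.2)⟩ :
        Fin (n + 1)))
  intro T T' h
  apply Subtype.ext
  apply SemistandardYoungTableau.ext
  intro i j
  by_cases hij : (i, j) ∈ μ
  · have := congrFun h ⟨(i, j), (YoungDiagram.mem_cells _).mpr hij⟩
    simpa using congrArg Fin.val this
  · rw [T.1.zeros hij, T'.1.zeros hij]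

/-- The content of a tableau: `ssytContent μ n T k` is the number of entries of `T`
equal to `k` (0-indexed). -/
def ssytContent (μ : YoungDiagram) (n : ℕ) (T : SSYTn μ n) : Fin n → ℕ :=
  fun k => (μ.cells.filter (fun c => T.1 c.1 c.2 = (k : ℕ))).card

/-- The cyclic shift `c(x_1,…,x_n) = (x_n, x_1, …, x_{n-1})` (0-indexed). -/
def cycShift {n : ℕ} {α : Type*} (x : Fin n → α) : Fin n → α :=
  fun i => if _h : (i : ℕ) = 0 then x ⟨n - 1, by have := i.isLt; omega⟩
           else x ⟨(i : ℕ) - 1, by have := i.isLt; omega⟩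

/-!
For each `a`, the Bender–Knuth involution is a bijection of `SSYT_n(λ)` exchanging the
multiplicities of `a` and `a + 1` and fixing all others. Since adjacent transpositions generate
the symmetric group, every permutation of the content is realised by a bijection of
`SSYT_n(λ)`; for the cyclic rotation of the content the statistic `∑ (i - 1) c_i` drops by `|λ|`
modulo `n`. As `|λ|` is invertible modulo `n`, iterating this bijection links every residue class
to every other one, so all `n` classes have the same size.
-/

namespace Finset

variable {α : Type*} [LinearOrder α]

theorem card_filter_card_filter_le_le (F : Finset α) {m : ℕ} (hm : m ≤ #F) :
    #{j ∈ F | #{x ∈ F | x ≤ j} ≤ m} = m := by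
  induction F using Finset.induction_on_max generalizing m with
  | empty => simp_all
  | insert x s hlt ih =>
    have hx : x ∉ s := fun h => (hlt x h).false
    have hrank : ∀ j ∈ s, #{y ∈ insert x s | y ≤ j} = #{y ∈ s | y ≤ j} := fun j hj => by
      rw [filter_insert, if_neg (hlt j hj).not_ge]
    rw [card_insert_of_notMem hx] at hm
    rcases hm.lt_or_eq with hm | rfl
    · rw [filter_insert, if_neg, filter_congr fun j hj => by rw [hrank j hj]]
      · exact ih (by omega)
      · rw [filter_insert, if_pos le_rfl, card_insert_of_notMem (by simp [hx]),
          filter_true_of_mem fun y hy => (hlt y hy).le]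
        omega
    · rw [filter_true_of_mem fun j _ => ?_, card_insert_of_notMem hx]
      exact (card_filter_le _ _).trans (card_insert_le _ _)

theorem card_filter_le_le_card_left_iff {L H : Finset α} (hLH : ∀ x ∈ L, ∀ y ∈ H, x < y)
    {j : α} (hj : j ∈ L ∪ H) : #{x ∈ L ∪ H | x ≤ j} ≤ #L ↔ j ∈ L := by
  constructor
  · intro hle
    by_contra hjL
    have hjH : j ∈ H := (mem_union.mp hj).resolve_left hjL
    have hsub : insert j L ⊆ {x ∈ L ∪ H | x ≤ j} := by
      intro x hx
      rcases mem_insert.mp hx with rfl | hx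
      · exact mem_filter.mpr ⟨hj, le_rfl⟩
      · exact mem_filter.mpr ⟨mem_union_left _ hx, (hLH x hx j hjH).le⟩
    have := card_le_card hsub
    rw [card_insert_of_notMem hjL] at this
    omega
  · intro hjL
    refine card_le_card fun x hx => ?_
    obtain ⟨hx, hxj⟩ := mem_filter.mp hx
    exact (mem_union.mp hx).resolve_right fun hxH => (hLH j hjL x hxH).not_ge hxj

theorem card_filter_le_lt_card_filter_le {F : Finset α} {j j' : α} (hj' : j' ∈ F)
    (hjj' : j < j') : #{x ∈ F | x ≤ j} < #{x ∈ F | x ≤ j'} := by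
  refine card_lt_card ⟨fun x hx => ?_, fun h => ?_⟩
  · rw [mem_filter] at hx ⊢
    exact ⟨hx.1, hx.2.trans hjj'.le⟩
  · exact (mem_filter.mp (h (mem_filter.mpr ⟨hj', le_rfl⟩))).2.not_gt hjj'

end Finset

theorem YoungDiagram.card_filter_cells (μ : YoungDiagram) (P : ℕ → ℕ → Prop)
    [∀ i j, Decidable (P i j)] :
    #{c ∈ μ.cells | P c.1 c.2}
      = ∑ i ∈ range (μ.colLen 0), #{j ∈ range (μ.rowLen i) | P i j} := by
  refine card_eq_sum_card_fiberwise (f := Prod.fst) (fun c hc => ?_) |>.trans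
    (sum_congr rfl fun i _ => ?_)
  · have hc := (YoungDiagram.mem_cells _).mp (mem_filter.mp hc).1
    exact mem_range.mpr
      (YoungDiagram.mem_iff_lt_colLen.mp (μ.up_left_mem le_rfl (Nat.zero_le _) hc))
  · refine (congrArg card (Finset.ext ?_)).trans (card_map ⟨_, Prod.mk_right_injective i⟩)
    rintro ⟨i', j⟩
    simp only [mem_filter, mem_map, mem_range, YoungDiagram.mem_cells,
      YoungDiagram.mem_iff_lt_rowLen, Function.Embedding.coeFn_mk, Prod.mk.injEq]
    constructor
    · rintro ⟨⟨hj, hP⟩, rfl⟩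
      exact ⟨j, ⟨hj, hP⟩, rfl, rfl⟩
    · rintro ⟨j, ⟨hj, hP⟩, rfl, rfl⟩
      exact ⟨⟨hj, hP⟩, rfl⟩

namespace SemistandardYoungTableau

variable {μ : YoungDiagram} (T : SemistandardYoungTableau μ) (a : ℕ)

def IsFreeLow (i j : ℕ) : Prop := (i, j) ∈ μ ∧ T i j = a ∧ T (i + 1) j ≠ a + 1

/-- For `i = 0` the last condition reads `T 0 j ≠ a` (as `0 - 1 = 0` in `ℕ`), which always
holds. -/
def IsFreeHigh (i j : ℕ) : Prop := (i, j) ∈ μ ∧ T i j = a + 1 ∧ T (i - 1) j ≠ a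

def IsFree (i j : ℕ) : Prop := T.IsFreeLow a i j ∨ T.IsFreeHigh a i j

instance (i j : ℕ) : Decidable (T.IsFreeLow a i j) := inferInstanceAs (Decidable (_ ∧ _ ∧ _))

instance (i j : ℕ) : Decidable (T.IsFreeHigh a i j) := inferInstanceAs (Decidable (_ ∧ _ ∧ _))

instance (i j : ℕ) : Decidable (T.IsFree a i j) := inferInstanceAs (Decidable (_ ∨ _))

def freeLowCols (i : ℕ) : Finset ℕ := {j ∈ range (μ.rowLen i) | T.IsFreeLow a i j}

def freeHighCols (i : ℕ) : Finset ℕ := {j ∈ range (μ.rowLen i) | T.IsFreeHigh a i j}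

def freeCols (i : ℕ) : Finset ℕ := T.freeLowCols a i ∪ T.freeHighCols a i

def freeRank (i j : ℕ) : ℕ := #{j' ∈ T.freeCols a i | j' ≤ j}

def entryCount (k : ℕ) : ℕ := #{c ∈ μ.cells | T c.1 c.2 = k}

variable {T a} {i j i' j' k : ℕ}

theorem IsFree.mem (h : T.IsFree a i j) : (i, j) ∈ μ := h.elim (·.1) (·.1)

theorem IsFree.entry_eq (h : T.IsFree a i j) : T i j = a ∨ T i j = a + 1 :=
  h.imp (·.2.1) (·.2.1)

theorem isFreeLow_iff : T.IsFreeLow a i j ↔ T.IsFree a i j ∧ T i j = a := by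
  refine ⟨fun h => ⟨Or.inl h, h.2.1⟩, fun ⟨h, he⟩ => h.resolve_right fun h' => ?_⟩
  have := h'.2.1
  omega

theorem isFreeHigh_iff : T.IsFreeHigh a i j ↔ T.IsFree a i j ∧ T i j = a + 1 := by
  refine ⟨fun h => ⟨Or.inr h, h.2.1⟩, fun ⟨h, he⟩ => h.resolve_left fun h' => ?_⟩
  have := h'.2.1
  omega

theorem mem_freeCols : j ∈ T.freeCols a i ↔ T.IsFree a i j := by
  simp only [freeCols, freeLowCols, freeHighCols, ← filter_or, mem_filter, mem_range]
  exact ⟨And.right, fun h => ⟨YoungDiagram.mem_iff_lt_rowLen.mp h.mem, h⟩⟩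

theorem card_freeCols :
    #(T.freeCols a i) = #(T.freeLowCols a i) + #(T.freeHighCols a i) := by
  refine card_union_of_disjoint (disjoint_filter.mpr fun j _ hl hh => ?_)
  have := hl.2.1
  have := hh.2.1
  omega

theorem IsFree.entry_lt_of_lt (h : T.IsFree a i j) (hi : i' < i) : T i' j < a := by
  have hle : T i' j ≤ T (i - 1) j :=
    T.col_weak (by omega) (μ.up_left_mem (by omega) le_rfl h.mem)
  have hlt : T (i - 1) j < T i j := T.col_strict (by omega) h.mem
  rcases h with h | h
  · have := h.2.1
    omega
  · have := h.2.1
    have := h.2.2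
    omega

theorem IsFree.add_two_le_of_lt (h : T.IsFree a i j) (hi : i < i') (hm : (i', j) ∈ μ) :
    a + 2 ≤ T i' j := by
  have hle : T (i + 1) j ≤ T i' j := T.col_weak hi hm
  have hlt : T i j < T (i + 1) j := T.col_strict (by omega) (μ.up_left_mem hi le_rfl hm)
  rcases h with h | h
  · have := h.2.1
    have := h.2.2
    omega
  · have := h.2.1
    omega

theorem IsFree.not_isFree_of_ne (h : T.IsFree a i j) (hi : i' ≠ i) : ¬ T.IsFree a i' j := by
  intro h'
  rcases Nat.lt_or_gt_of_ne hi with hi | hi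
  · have := h.entry_lt_of_lt hi
    rcases h'.entry_eq with he | he <;> omega
  · have := h.add_two_le_of_lt hi h'.mem
    rcases h'.entry_eq with he | he <;> omega

theorem entry_succ_eq_of_not_isFree (hm : (i, j) ∈ μ) (he : T i j = a)
    (h : ¬ T.IsFree a i j) : T (i + 1) j = a + 1 := by
  by_contra hne
  exact h (Or.inl ⟨hm, he, hne⟩)

theorem exists_entry_pred_eq_of_not_isFree (hm : (i, j) ∈ μ) (he : T i j = a + 1)
    (h : ¬ T.IsFree a i j) : ∃ i₀, i = i₀ + 1 ∧ T i₀ j = a := by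
  have hab : T (i - 1) j = a := by
    by_contra hne
    exact h (Or.inr ⟨hm, he, hne⟩)
  obtain _ | i₀ := i
  · rw [Nat.zero_sub] at hab
    omega
  · exact ⟨i₀, rfl, hab⟩

theorem not_isFree_of_entry_succ_eq (he : T i j = a) (he' : T (i + 1) j = a + 1) :
    ¬ T.IsFree a i j ∧ ¬ T.IsFree a (i + 1) j := by
  refine ⟨fun h => ?_, fun h => ?_⟩
  · rcases h with h | h
    · exact h.2.2 he'
    · have := h.2.1
      omega
  · rcases h with h | h
    · have := h.2.1
      omega
    · exact h.2.2 he

theorem IsFree.succ_le_of_lt (h : T.IsFree a i j) (hj : j < j') (hm : (i, j') ∈ μ)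
    (h' : ¬ T.IsFree a i j') : a + 1 ≤ T i j' := by
  -- otherwise `T i j' = a` has `a + 1` below it, and so would the free `a` at `(i, j)`
  have hle : T i j ≤ T i j' := T.row_weak hj hm
  by_contra hlt
  have he' : T i j' = a := by rcases h.entry_eq with he | he <;> omega
  have he : T i j = a := by rcases h.entry_eq with he | he <;> omega
  have hb' := entry_succ_eq_of_not_isFree hm he' h'
  have hmb : (i + 1, j') ∈ μ := by
    by_contra hnm
    rw [T.zeros hnm] at hb'
    omega
  have hb : T (i + 1) j ≤ a + 1 := hb' ▸ T.row_weak hj hmb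
  have hb₀ : T i j < T (i + 1) j := T.col_strict (by omega) (μ.up_left_mem le_rfl hj.le hmb)
  exact (not_isFree_of_entry_succ_eq he (by omega)).1 h

theorem IsFree.le_of_lt (h : T.IsFree a i j) (hj : j' < j) (h' : ¬ T.IsFree a i j') :
    T i j' ≤ a := by
  -- otherwise `T i j' = a + 1` has `a` above it, and so would the free `a + 1` at `(i, j)`
  have hle : T i j' ≤ T i j := T.row_weak hj h.mem
  by_contra hlt
  have he' : T i j' = a + 1 := by rcases h.entry_eq with he | he <;> omega
  have he : T i j = a + 1 := by rcases h.entry_eq with he | he <;> omega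
  obtain ⟨i₀, rfl, hab'⟩ :=
    exists_entry_pred_eq_of_not_isFree (μ.up_left_mem le_rfl hj.le h.mem) he' h'
  have ha : a ≤ T i₀ j := hab' ▸ T.row_weak hj (μ.up_left_mem (by omega) le_rfl h.mem)
  have ha₀ : T i₀ j < T (i₀ + 1) j := T.col_strict (by omega) h.mem
  exact (not_isFree_of_entry_succ_eq (by omega) he).2 h

variable (T a) in
/-- In each row the free cells read `a, …, a, a + 1, …, a + 1`; the Bender–Knuth move
exchanges the number of `a`s and `a + 1`s among them. -/
def benderKnuth : SemistandardYoungTableau μ where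
  entry i j := if T.IsFree a i j then
    (if T.freeRank a i j ≤ #(T.freeHighCols a i) then a else a + 1) else T i j
  row_weak' {i j j'} hj hm := by
    by_cases h : T.IsFree a i j <;> by_cases h' : T.IsFree a i j' <;>
      simp only [h, h', if_true, if_false]
    · have := card_filter_le_lt_card_filter_le (mem_freeCols.mpr h') hj
      unfold freeRank
      split_ifs <;> omega
    · have := h.succ_le_of_lt hj hm h'
      split_ifs <;> omega
    · have := h'.le_of_lt hj h
      split_ifs <;> omega
    · exact T.row_weak hj hm
  col_strict' {i i' j} hi hm := by
    by_cases h : T.IsFree a i j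
    · have := h.add_two_le_of_lt hi hm
      simp only [h, if_true, h.not_isFree_of_ne hi.ne', if_false]
      split_ifs <;> omega
    · by_cases h' : T.IsFree a i' j
      · have := h'.entry_lt_of_lt hi
        simp only [h, h', if_true, if_false]
        split_ifs <;> omega
      · simp only [h, h', if_false]
        exact T.col_strict hi hm
  zeros' {i j} hm := by
    rw [if_neg fun h => hm h.mem]
    exact T.zeros hm

theorem benderKnuth_apply_of_isFree (h : T.IsFree a i j) :
    T.benderKnuth a i j = if T.freeRank a i j ≤ #(T.freeHighCols a i) then a else a + 1 :=
  if_pos h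

theorem benderKnuth_apply_of_not_isFree (h : ¬ T.IsFree a i j) : T.benderKnuth a i j = T i j :=
  if_neg h

theorem isFree_benderKnuth : (T.benderKnuth a).IsFree a i j ↔ T.IsFree a i j := by
  refine ⟨fun h' => ?_, fun h => ?_⟩
  · by_contra h
    have heq := benderKnuth_apply_of_not_isFree h
    rcases h'.entry_eq with he | he <;> rw [heq] at he
    · have hb := entry_succ_eq_of_not_isFree h'.mem he h
      have hbk := benderKnuth_apply_of_not_isFree (not_isFree_of_entry_succ_eq he hb).2
      exact (isFreeLow_iff.mpr ⟨h', heq.trans he⟩).2.2 (hbk.trans hb)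
    · obtain ⟨i₀, rfl, ha⟩ := exists_entry_pred_eq_of_not_isFree h'.mem he h
      have hbk := benderKnuth_apply_of_not_isFree (not_isFree_of_entry_succ_eq ha he).1
      exact (isFreeHigh_iff.mpr ⟨h', heq.trans he⟩).2.2 (hbk.trans ha)
  · have happ := benderKnuth_apply_of_isFree h
    split_ifs at happ
    · refine Or.inl ⟨h.mem, happ, ?_⟩
      rw [benderKnuth_apply_of_not_isFree (h.not_isFree_of_ne (by omega))]
      by_cases hm : (i + 1, j) ∈ μ
      · have := h.add_two_le_of_lt (by omega) hm
        omega
      · rw [T.zeros hm]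
        omega
    · refine Or.inr ⟨h.mem, happ, ?_⟩
      rcases i with _ | i
      · rw [Nat.zero_sub, happ]
        omega
      · rw [Nat.add_sub_cancel, benderKnuth_apply_of_not_isFree (h.not_isFree_of_ne (by omega))]
        exact (h.entry_lt_of_lt (by omega)).ne

theorem freeCols_benderKnuth : (T.benderKnuth a).freeCols a i = T.freeCols a i :=
  Finset.ext fun _ => by rw [mem_freeCols, mem_freeCols, isFree_benderKnuth]

theorem freeRank_benderKnuth : (T.benderKnuth a).freeRank a i j = T.freeRank a i j := by
  rw [freeRank, freeRank, freeCols_benderKnuth]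

theorem freeLowCols_eq_filter : T.freeLowCols a i = {j ∈ T.freeCols a i | T i j = a} := by
  ext j
  simp only [freeLowCols, mem_filter, mem_range, mem_freeCols, isFreeLow_iff]
  exact ⟨And.right, fun h => ⟨YoungDiagram.mem_iff_lt_rowLen.mp h.1.mem, h⟩⟩

theorem card_freeLowCols_benderKnuth :
    #((T.benderKnuth a).freeLowCols a i) = #(T.freeHighCols a i) := by
  rw [freeLowCols_eq_filter, freeCols_benderKnuth]
  calc _ = #{j ∈ T.freeCols a i | T.freeRank a i j ≤ #(T.freeHighCols a i)} := by
        refine congrArg card (filter_congr fun j hj => ?_)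
        rw [benderKnuth_apply_of_isFree (mem_freeCols.mp hj)]
        split_ifs with hr <;> simp [hr]
    _ = _ := card_filter_card_filter_le_le _ (card_freeCols ▸ Nat.le_add_left _ _)

theorem card_freeHighCols_benderKnuth :
    #((T.benderKnuth a).freeHighCols a i) = #(T.freeLowCols a i) := by
  have h := card_freeCols (T := T.benderKnuth a) (a := a) (i := i)
  rw [freeCols_benderKnuth, card_freeCols, card_freeLowCols_benderKnuth] at h
  omega

theorem IsFree.entry_eq_iff_freeRank_le (h : T.IsFree a i j) :
    T i j = a ↔ T.freeRank a i j ≤ #(T.freeLowCols a i) := by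
  rw [freeRank, freeCols, card_filter_le_le_card_left_iff ?_ (mem_freeCols.mpr h),
    freeLowCols_eq_filter, mem_filter, mem_freeCols]
  · exact ⟨fun he => ⟨h, he⟩, And.right⟩
  · intro x hx y hy
    have hx := (mem_filter.mp hx).2
    have hy := (mem_filter.mp hy).2
    by_contra hyx
    have := T.row_weak_of_le (not_lt.mp hyx) hx.1
    have := hx.2.1
    have := hy.2.1
    omega

@[simp]
theorem benderKnuth_benderKnuth : (T.benderKnuth a).benderKnuth a = T := by
  ext i j
  by_cases h : T.IsFree a i j
  · rw [benderKnuth_apply_of_isFree (isFree_benderKnuth.mpr h), freeRank_benderKnuth,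
      card_freeHighCols_benderKnuth]
    rcases h.entry_eq with he | he
    · rw [if_pos (h.entry_eq_iff_freeRank_le.mp he), he]
    · rw [if_neg (mt h.entry_eq_iff_freeRank_le.mpr (by omega)), he]
  · rw [benderKnuth_apply_of_not_isFree (mt isFree_benderKnuth.mp h),
      benderKnuth_apply_of_not_isFree h]

variable (a) in
theorem entryCount_eq_add :
    T.entryCount k = #{c ∈ μ.cells | T c.1 c.2 = k ∧ T.IsFree a c.1 c.2}
      + #{c ∈ μ.cells | T c.1 c.2 = k ∧ ¬ T.IsFree a c.1 c.2} := by
  rw [entryCount, ← card_filter_add_card_filter_not (fun c => T.IsFree a c.1 c.2),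
    filter_filter, filter_filter]

theorem card_cells_entry_eq_isFree :
    #{c ∈ μ.cells | T c.1 c.2 = a ∧ T.IsFree a c.1 c.2}
      = ∑ i ∈ range (μ.colLen 0), #(T.freeLowCols a i) := by
  simp only [and_comm, ← isFreeLow_iff]
  exact μ.card_filter_cells _

theorem card_cells_entry_eq_succ_isFree :
    #{c ∈ μ.cells | T c.1 c.2 = a + 1 ∧ T.IsFree a c.1 c.2}
      = ∑ i ∈ range (μ.colLen 0), #(T.freeHighCols a i) := by
  simp only [and_comm, ← isFreeHigh_iff]
  exact μ.card_filter_cells _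

/-- A non-free `a` sits directly above a non-free `a + 1`, and conversely. -/
theorem card_cells_entry_eq_not_isFree :
    #{c ∈ μ.cells | T c.1 c.2 = a ∧ ¬ T.IsFree a c.1 c.2}
      = #{c ∈ μ.cells | T c.1 c.2 = a + 1 ∧ ¬ T.IsFree a c.1 c.2} := by
  refine card_nbij' (fun c => (c.1 + 1, c.2)) (fun c => (c.1 - 1, c.2)) ?_ ?_ ?_ ?_
  · rintro ⟨i, j⟩ hc
    simp only [mem_coe, mem_filter, YoungDiagram.mem_cells] at hc ⊢
    have hb := entry_succ_eq_of_not_isFree hc.1 hc.2.1 hc.2.2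
    refine ⟨?_, hb, (not_isFree_of_entry_succ_eq hc.2.1 hb).2⟩
    by_contra hm
    rw [T.zeros hm] at hb
    omega
  · rintro ⟨i, j⟩ hc
    simp only [mem_coe, mem_filter, YoungDiagram.mem_cells] at hc ⊢
    obtain ⟨i₀, rfl, ha⟩ := exists_entry_pred_eq_of_not_isFree hc.1 hc.2.1 hc.2.2
    exact ⟨μ.up_left_mem (by omega) le_rfl hc.1, ha, (not_isFree_of_entry_succ_eq ha hc.2.1).1⟩
  · rintro ⟨i, j⟩ _
    simp
  · rintro ⟨i, j⟩ hc
    simp only [mem_coe, mem_filter, YoungDiagram.mem_cells] at hc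
    obtain ⟨i₀, rfl, -⟩ := exists_entry_pred_eq_of_not_isFree hc.1 hc.2.1 hc.2.2
    simp

theorem entryCount_benderKnuth_self : (T.benderKnuth a).entryCount a = T.entryCount (a + 1) := by
  rw [entryCount_eq_add a, entryCount_eq_add a, card_cells_entry_eq_isFree,
    card_cells_entry_eq_succ_isFree, ← card_cells_entry_eq_not_isFree]
  congr 1
  · exact sum_congr rfl fun i _ => card_freeLowCols_benderKnuth
  · refine congrArg card (filter_congr fun c _ => ?_)
    rw [isFree_benderKnuth]
    exact ⟨fun ⟨he, h⟩ => ⟨benderKnuth_apply_of_not_isFree h ▸ he, h⟩,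
      fun ⟨he, h⟩ => ⟨(benderKnuth_apply_of_not_isFree h).trans he, h⟩⟩

theorem entryCount_benderKnuth_succ : (T.benderKnuth a).entryCount (a + 1) = T.entryCount a := by
  conv_rhs => rw [← benderKnuth_benderKnuth (T := T) (a := a)]
  exact entryCount_benderKnuth_self.symm

theorem entryCount_benderKnuth_of_ne (h₁ : k ≠ a) (h₂ : k ≠ a + 1) :
    (T.benderKnuth a).entryCount k = T.entryCount k := by
  refine congrArg card (filter_congr fun c _ => ?_)
  by_cases h : T.IsFree a c.1 c.2
  · have := (isFree_benderKnuth.mpr h).entry_eq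
    have := h.entry_eq
    omega
  · rw [benderKnuth_apply_of_not_isFree h]

end SemistandardYoungTableau

theorem card_mul_card_fiber_eq_card {G X : Type*} [AddGroup G] [Fintype G] [Finite X]
    (f : X → G) (Φ : X ≃ X) {c : G} (hc : ∀ t : G, ∃ k : ℕ, k • c = t)
    (hΦ : ∀ x, f (Φ x) = f x + c) (s : G) :
    Fintype.card G * Nat.card {x // f x = s} = Nat.card X := by
  have hstep : ∀ t, Nat.card {x // f x = t + c} = Nat.card {x // f x = t} := fun t =>
    (Nat.card_congr (Φ.subtypeEquiv fun x => by rw [hΦ, add_left_inj])).symm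
  have hiter : ∀ k : ℕ, Nat.card {x // f x = s + k • c} = Nat.card {x // f x = s} := by
    intro k
    induction k with
    | zero => simp
    | succ k ih => rw [succ_nsmul, ← add_assoc, hstep, ih]
  have hconst : ∀ t, Nat.card {x // f x = t} = Nat.card {x // f x = s} := fun t => by
    obtain ⟨k, hk⟩ := hc (-s + t)
    rw [← hiter k, hk, add_neg_cancel_left]
  rw [← Nat.card_congr (Equiv.sigmaFiberEquiv f), Nat.card_sigma,
    sum_congr rfl fun t _ => hconst t, sum_const, card_univ, smul_eq_mul]

theorem ZMod.exists_nsmul_eq_of_isUnit {n : ℕ} [NeZero n] {c : ZMod n} (hc : IsUnit c)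
    (t : ZMod n) : ∃ k : ℕ, k • c = t :=
  ⟨(t * ↑hc.unit⁻¹).val, by
    rw [nsmul_eq_mul, ZMod.natCast_zmod_val, mul_assoc, hc.val_inv_mul, mul_one]⟩

theorem ZMod.sum_val_mul_comp_finRotate {n : ℕ} (c : Fin n → ZMod n) :
    ∑ i : Fin n, ((i : ℕ) : ZMod n) * c (finRotate n i)
      = ∑ i : Fin n, ((i : ℕ) : ZMod n) * c i - ∑ i, c i := by
  obtain _ | m := n
  · simp
  have hval : ∀ i, ((finRotate (m + 1) i : ℕ) : ZMod (m + 1)) = (i : ℕ) + 1 := fun i => by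
    rw [finRotate_apply, Fin.val_add, ZMod.natCast_mod, Nat.cast_add, Fin.val_one',
      ZMod.natCast_mod, Nat.cast_one]
  rw [← sum_sub_distrib,
    ← Equiv.sum_comp (finRotate (m + 1))
      fun j : Fin (m + 1) => ((j : ℕ) : ZMod (m + 1)) * c j - c j]
  refine sum_congr rfl fun i _ => ?_
  rw [hval]
  ring

open SemistandardYoungTableau Equiv

namespace SSYTn

variable {μ : YoungDiagram} {n : ℕ}

def benderKnuth (a : ℕ) (ha : a + 1 < n) (T : SSYTn μ n) : SSYTn μ n :=
  ⟨T.1.benderKnuth a, fun i j hm => by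
    by_cases h : T.1.IsFree a i j
    · have := (isFree_benderKnuth.mpr h).entry_eq
      omega
    · rw [benderKnuth_apply_of_not_isFree h]
      exact T.2 i j hm⟩

theorem benderKnuth_involutive (a : ℕ) (ha : a + 1 < n) :
    Function.Involutive (benderKnuth (μ := μ) a ha) :=
  fun _ => Subtype.ext benderKnuth_benderKnuth

end SSYTn

def contentSymmetries (μ : YoungDiagram) (n : ℕ) : Submonoid (Perm (Fin n)) where
  carrier :=
    {σ | ∃ Φ : SSYTn μ n ≃ SSYTn μ n, ∀ T, ssytContent μ n (Φ T) = ssytContent μ n T ∘ σ}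
  one_mem' := ⟨Equiv.refl _, fun _ => rfl⟩
  mul_mem' := by
    rintro σ τ ⟨Φ, hΦ⟩ ⟨Ψ, hΨ⟩
    exact ⟨Φ.trans Ψ, fun T => by rw [trans_apply, hΨ, hΦ]; rfl⟩

variable {μ : YoungDiagram} {n : ℕ}

theorem swap_mem_contentSymmetries {m : ℕ} (a : Fin m) :
    swap a.castSucc a.succ ∈ contentSymmetries μ (m + 1) := by
  refine ⟨(SSYTn.benderKnuth_involutive a (by omega)).toPerm, fun T => funext fun k => ?_⟩
  change (T.1.benderKnuth a).entryCount k = T.1.entryCount (swap a.castSucc a.succ k)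
  rcases eq_or_ne k a.castSucc with rfl | h₁
  · rw [swap_apply_left]
    exact entryCount_benderKnuth_self
  rcases eq_or_ne k a.succ with rfl | h₂
  · rw [swap_apply_right]
    exact entryCount_benderKnuth_succ
  rw [swap_apply_of_ne_of_ne h₁ h₂]
  exact entryCount_benderKnuth_of_ne (fun h => h₁ (Fin.ext h)) (fun h => h₂ (Fin.ext h))

theorem contentSymmetries_eq_top : contentSymmetries μ n = ⊤ := by
  obtain _ | m := n
  · exact eq_top_iff.mpr fun σ _ => Subsingleton.elim 1 σ ▸ one_mem _
  · rw [eq_top_iff, ← Perm.mclosure_swap_castSucc_succ, Submonoid.closure_le]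
    rintro _ ⟨a, rfl⟩
    exact swap_mem_contentSymmetries a

def contentWeight (T : SSYTn μ n) : ZMod n :=
  ∑ i : Fin n, ((i : ℕ) : ZMod n) * ssytContent μ n T i

theorem sum_ssytContent (T : SSYTn μ n) : ∑ i, ssytContent μ n T i = μ.card := by
  change ∑ i : Fin n, T.1.entryCount i = _
  rw [Fin.sum_univ_eq_sum_range (fun k => T.1.entryCount k)]
  exact (card_eq_sum_card_fiberwise fun c hc =>
    mem_range.mpr (T.2 c.1 c.2 ((YoungDiagram.mem_cells _).mp hc))).symm

theorem exists_equiv_contentWeight_eq_sub :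
    ∃ Φ : SSYTn μ n ≃ SSYTn μ n, ∀ T,
      contentWeight (Φ T) = contentWeight T - μ.card := by
  obtain ⟨Φ, hΦ⟩ : finRotate n ∈ contentSymmetries μ n :=
    contentSymmetries_eq_top ▸ Submonoid.mem_top _
  refine ⟨Φ, fun T => ?_⟩
  rw [contentWeight, hΦ, contentWeight, ← sum_ssytContent T, Nat.cast_sum]
  exact ZMod.sum_val_mul_comp_finRotate fun i => (ssytContent μ n T i : ZMod n)

theorem natCast_sum_eq_contentWeight (T : SSYTn μ n) :
    ((∑ i : Fin n, (i : ℕ) * ssytContent μ n T i : ℕ) : ZMod n) = contentWeight T := by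
  rw [contentWeight]
  push_cast
  rfl

theorem stmt8_general (n : ℕ) (μ : YoungDiagram)
    (hgcd : Nat.Coprime n μ.card) :
    ∀ r : ℕ, r < n →
      n * Nat.card {T : SSYTn μ n // (∑ i : Fin n, (i : ℕ) * ssytContent μ n T i) % n = r}
        = Fintype.card (SSYTn μ n) := by
  intro r hr
  have : NeZero n := ⟨by omega⟩
  obtain ⟨Φ, hΦ⟩ := exists_equiv_contentWeight_eq_sub (μ := μ) (n := n)
  have hunit : IsUnit (-(μ.card : ZMod n)) := ((ZMod.isUnit_iff_coprime _ _).mpr hgcd.symm).neg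
  have hfiber : ∀ T : SSYTn μ n,
      (∑ i : Fin n, (i : ℕ) * ssytContent μ n T i) % n = r ↔ contentWeight T = r := by
    intro T
    rw [← natCast_sum_eq_contentWeight, ZMod.natCast_eq_natCast_iff', Nat.mod_eq_of_lt hr]
  calc n * Nat.card {T : SSYTn μ n // (∑ i : Fin n, (i : ℕ) * ssytContent μ n T i) % n = r}
      = Fintype.card (ZMod n) * Nat.card {T // contentWeight T = r} := by
        rw [ZMod.card, Nat.card_congr (subtypeEquivRight hfiber)]
    _ = Nat.card (SSYTn μ n) :=
        card_mul_card_fiber_eq_card contentWeight Φ (ZMod.exists_nsmul_eq_of_isUnit hunit)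
          (fun T => by rw [hΦ, sub_eq_add_neg]) r
    _ = Fintype.card (SSYTn μ n) := Nat.card_eq_fintype_card

theorem stmt8 (n : ℕ) (μ : YoungDiagram) (hlen : μ.colLen 0 < n)
    (hgcd : Nat.Coprime n μ.card) :
    ∀ r : ℕ, r < n →
      n * Nat.card {T : SSYTn μ n // (∑ i : Fin n, (i : ℕ) * ssytContent μ n T i) % n = r}
        = Fintype.card (SSYTn μ n) :=
  stmt8_general n μ hgcd
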